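/- Let n ≥ 5 be an integer and let s₀ be the smallest root of the quadratic 4(n-1)s² - (2n² + 8n - 8)s + n² = 0. Then 0 < s₀ < 1, and for every s with s₀ < s < 1 there exists σ ∈ ℝ with -4s/(n-2s) < σ < 0 and s - (3n-4)/(2(n-1)) < σ < s - n/(2(n-1)). -/

import Mathlib

/-!
Write `q(s) = a s² - b s + c` with `a = 4(n-1)`, `b = 2n² + 8n - 8`, `c = n²`. Factoring
`q(s) = a (s - s₀)(s - r)` with `r = b/a - s₀` and using `q(1) = -n² - 4n + 4 < 0` shows
`s₀ < 1 < r`; `q > 0` on `(-∞, 0]` forces `s₀ > 0`, and `q < 0` on `(s₀, 1)`. For such `s` the two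
open intervals meet iff each lower end lies below each upper end; the only nontrivial
comparison, `-4s/(n-2s) < s - n/(2(n-1))`, is equivalent to `q(s) < 0` after clearing
denominators.
-/

section Quadratic

variable {a b c s₀ : ℝ}

theorem quadratic_eq_mul_sub_mul_sub (ha : a ≠ 0) (hroot : a * s₀ ^ 2 - b * s₀ + c = 0)
    (s : ℝ) : a * s ^ 2 - b * s + c = a * (s - s₀) * (s - (b / a - s₀)) := by
  have hb : a * (b / a) = b := mul_div_cancel₀ b ha
  linear_combination hroot + (s - s₀) * hb

theorem pos_of_quadratic_root (ha : 0 ≤ a) (hb : 0 ≤ b) (hc : 0 < c)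
    (hroot : a * s₀ ^ 2 - b * s₀ + c = 0) : 0 < s₀ := by
  by_contra! h
  nlinarith [mul_nonneg ha (sq_nonneg s₀), mul_nonneg hb (neg_nonneg.mpr h)]

variable (ha : 0 < a) (hroot : a * s₀ ^ 2 - b * s₀ + c = 0)
include ha hroot

theorem lt_and_lt_other_root_of_quadratic_neg
    (hmin : ∀ s : ℝ, a * s ^ 2 - b * s + c = 0 → s₀ ≤ s) {t : ℝ}
    (ht : a * t ^ 2 - b * t + c < 0) : s₀ < t ∧ t < b / a - s₀ := by
  have hfac := quadratic_eq_mul_sub_mul_sub ha.ne' hroot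
  have hle : s₀ ≤ b / a - s₀ := hmin _ (by rw [hfac]; ring)
  rw [hfac, mul_assoc] at ht
  have hneg : (t - s₀) * (t - (b / a - s₀)) < 0 := neg_of_mul_neg_right ht ha.le
  constructor <;> nlinarith

theorem quadratic_neg_of_lt_of_lt_other_root {s : ℝ} (h₁ : s₀ < s) (h₂ : s < b / a - s₀) :
    a * s ^ 2 - b * s + c < 0 := by
  rw [quadratic_eq_mul_sub_mul_sub ha.ne' hroot]
  exact mul_neg_of_pos_of_neg (mul_pos ha (sub_pos.mpr h₁)) (sub_neg.mpr h₂)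

end Quadratic

theorem exists_lt_lt_lt_lt {α : Type*} [LinearOrder α] [DenselyOrdered α] {l₁ u₁ l₂ u₂ : α}
    (h₁₁ : l₁ < u₁) (h₁₂ : l₁ < u₂) (h₂₁ : l₂ < u₁) (h₂₂ : l₂ < u₂) :
    ∃ σ, l₁ < σ ∧ σ < u₁ ∧ l₂ < σ ∧ σ < u₂ := by
  obtain ⟨σ, hl, hu⟩ := exists_between (max_lt (lt_min h₁₁ h₁₂) (lt_min h₂₁ h₂₂))
  rw [max_lt_iff] at hl
  rw [lt_min_iff] at hu
  exact ⟨σ, hl.1, hu.1, hl.2, hu.2⟩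

section Bounds

variable {N s : ℝ} (hN : 2 < N)
include hN

theorem sub_div_lt_sub_div : s - (3 * N - 4) / (2 * (N - 1)) < s - N / (2 * (N - 1)) := by
  have : N / (2 * (N - 1)) < (3 * N - 4) / (2 * (N - 1)) := by
    gcongr
    · linarith
    · linarith
  linarith

variable (hs1 : s < 1)
include hs1

theorem neg_four_mul_div_neg (hs : 0 < s) : -4 * s / (N - 2 * s) < 0 :=
  div_neg_of_neg_of_pos (by linarith) (by linarith)

theorem sub_div_two_mul_sub_one_neg : s - (3 * N - 4) / (2 * (N - 1)) < 0 := by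
  have : 1 ≤ (3 * N - 4) / (2 * (N - 1)) := by
    rw [le_div_iff₀ (by linarith)]
    linarith
  linarith

theorem neg_four_mul_div_lt_sub_div_of_quadratic_neg
    (hq : 4 * (N - 1) * s ^ 2 - (2 * N ^ 2 + 8 * N - 8) * s + N ^ 2 < 0) :
    -4 * s / (N - 2 * s) < s - N / (2 * (N - 1)) := by
  have h₁ : 0 < N - 2 * s := by linarith
  have h₂ : 0 < 2 * (N - 1) := by linarith
  rw [div_lt_iff₀ h₁, sub_mul, div_mul_eq_mul_div, lt_sub_iff_add_lt, ← lt_sub_iff_add_lt',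
    div_lt_iff₀ h₂]
  nlinarith

end Bounds

theorem stmt_8 (n : ℕ) (s₀ : ℝ) (hn : 5 ≤ n)
    (hroot : 4 * (n - 1) * s₀ ^ 2 - (2 * n ^ 2 + 8 * n - 8) * s₀ + n ^ 2 = 0)
    (hmin : ∀ s : ℝ, 4 * (n - 1) * s ^ 2 - (2 * n ^ 2 + 8 * n - 8) * s + n ^ 2 = 0 → s₀ ≤ s) :
    0 < s₀ ∧ s₀ < 1 ∧
    ∀ s : ℝ, s₀ < s → s < 1 →
      ∃ σ : ℝ, -4 * s / (n - 2 * s) < σ ∧ σ < 0 ∧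
        s - (3 * n - 4) / (2 * (n - 1)) < σ ∧ σ < s - n / (2 * (n - 1)) := by
  have hN : (5 : ℝ) ≤ n := by exact_mod_cast hn
  have ha : (0 : ℝ) < 4 * (n - 1) := by linarith
  have hq1 : 4 * ((n : ℝ) - 1) * 1 ^ 2 - (2 * n ^ 2 + 8 * n - 8) * 1 + n ^ 2 < 0 := by nlinarith
  obtain ⟨hs₀1, h1r⟩ := lt_and_lt_other_root_of_quadratic_neg ha hroot hmin hq1
  have hs₀ : 0 < s₀ := pos_of_quadratic_root ha.le (by nlinarith) (by positivity) hroot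
  refine ⟨hs₀, hs₀1, fun s hs₀s hs1 => ?_⟩
  have hN2 : (2 : ℝ) < n := by linarith
  have hs : 0 < s := hs₀.trans hs₀s
  have hq := quadratic_neg_of_lt_of_lt_other_root ha hroot hs₀s (hs1.trans h1r)
  exact exists_lt_lt_lt_lt (neg_four_mul_div_neg hN2 hs1 hs)
    (neg_four_mul_div_lt_sub_div_of_quadratic_neg hN2 hs1 hq)
    (sub_div_two_mul_sub_one_neg hN2 hs1) (sub_div_lt_sub_div hN2)
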